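/- Let V, W be finite-dimensional real inner product spaces, G : V → W, D : W → V with ⟨Dw, v⟩ = −⟨w, Gv⟩ for all w, v, and let ρ : W → W be self-adjoint positive definite. If p* ∈ V solves ⟨ρ⁻¹ G p*, G q⟩ = (1/Δt)⟨D u*, q⟩ for all q ∈ V, then u^{n+1} := u* + Δt·ρ⁻¹ G p* satisfies D u^{n+1} = 0 exactly, even for variable (operator-valued) density ρ. -/
import Mathlib


open InnerProductSpace

/-- Exact discrete divergence-free property of the two-phase pressure-correction
update, for variable (operator-valued) density ρ. -/
theorem variable_density_update_div_free
    {V W : Type*} [NormedAddCommGroup V] [InnerProductSpace ℝ V] [FiniteDimensional ℝ V]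
    [NormedAddCommGroup W] [InnerProductSpace ℝ W] [FiniteDimensional ℝ W]
    (G : V →ₗ[ℝ] W) (D : W →ₗ[ℝ] V)
    (hadj : ∀ (w : W) (v : V), ⟪D w, v⟫_ℝ = -⟪w, G v⟫_ℝ)
    (ρ ρinv : W →ₗ[ℝ] W)
    (hρsym : ∀ w w' : W, ⟪ρ w, w'⟫_ℝ = ⟪w, ρ w'⟫_ℝ)
    (hρpos : ∀ w : W, w ≠ 0 → 0 < ⟪ρ w, w⟫_ℝ)
    (hinv₁ : ρ ∘ₗ ρinv = LinearMap.id) (hinv₂ : ρinv ∘ₗ ρ = LinearMap.id)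
    (Δt : ℝ) (hΔt : 0 < Δt)
    (ustar : W) (pstar : V)
    (hsol : ∀ q : V, ⟪ρinv (G pstar), G q⟫_ℝ = (1 / Δt) * ⟪D ustar, q⟫_ℝ) :
    D (ustar + Δt • ρinv (G pstar)) = 0 := by
  have key : ∀ q : V, ⟪D (ustar + Δt • ρinv (G pstar)), q⟫_ℝ = 0 := by
    intro q
    have h1 : ⟪D (ustar + Δt • ρinv (G pstar)), q⟫_ℝ
        = -⟪ustar, G q⟫_ℝ - Δt * ⟪ρinv (G pstar), G q⟫_ℝ := by
      rw [hadj]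
      rw [inner_add_left, real_inner_smul_left]
      ring
    rw [h1, hsol, hadj]
    field_simp
    ring
  have := key (D (ustar + Δt • ρinv (G pstar)))
  exact inner_self_eq_zero.mp this
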